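/- Let b ≥ 1 and τ ∈ {τ^b_0, τ^b_1}, and let φ be an instance of cubic monotone one-in-three 3-SAT with m clauses. If φ has a one-in-three model, then there is a τ-region (sup, sig) of the translator T such that sig(k_0) = … = sig(k_{6m−1}) = (0,b). -/

import Mathlib

/-! ## Transition systems -/

/-- A transition system over ambient state type `S` and event type `E`:
a set of states, a set of events, and a (deterministic or not) labeled
transition relation whose transitions stay inside the state/event sets. -/
structure TS (S E : Type) where
  states : Set S
  events : Set E
  tr : S → E → S → Prop
  tr_mem : ∀ ⦃s e s'⦄, tr s e s' → s ∈ states ∧ e ∈ events ∧ s' ∈ states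

/-- Event `e` occurs at state `s`. -/
def TS.occurs {S E : Type} (A : TS S E) (e : E) (s : S) : Prop := ∃ s', A.tr s e s'

/-! ## The types of nets `τ^b_t`, `t ∈ {0,1,2,3}` -/

/-- Events of the types of nets: pairs `(m,n)` or group events `c ∈ ℤ_{b+1}`. -/
inductive Tev where
  | pr (m n : ℕ)
  | gr (c : ℕ)
deriving DecidableEq

def Tev.minus : Tev → ℕ | .pr m _ => m | .gr _ => 0
def Tev.plus : Tev → ℕ | .pr _ n => n | .gr _ => 0
def Tev.absv : Tev → ℕ | .pr _ _ => 0 | .gr c => c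

/-- Membership in the event set of the type `τ^b_t`:
for `t ∈ {1,3}` (pure types) the pair events `(m,n)` with `m,n ≥ 1` are discarded;
for `t ∈ {2,3}` the pair `(0,0)` is discarded and the group events `0,…,b` are present;
for `t ∈ {0,1}` there are no group events. -/
def tevOk (b t : ℕ) : Tev → Prop
  | .pr m n => m ≤ b ∧ n ≤ b ∧ ((t = 1 ∨ t = 3) → (m = 0 ∨ n = 0)) ∧
      ((t = 2 ∨ t = 3) → ¬(m = 0 ∧ n = 0))
  | .gr c => c ≤ b ∧ (t = 2 ∨ t = 3)

/-- The partial transition function of the types `τ^b_t` on the states `{0,…,b}`. -/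
def tevStep (b s : ℕ) : Tev → Option ℕ
  | .pr m n => if m ≤ s ∧ s - m + n ≤ b then some (s - m + n) else none
  | .gr c => some ((s + c) % (b + 1))

/-! ## Regions, ESSP and SSP -/

/-- A `τ^b_t`-region of a transition system `A`. -/
structure Region (b t : ℕ) {S E : Type} (A : TS S E) where
  sup : S → ℕ
  sig : E → Tev
  sup_le : ∀ s ∈ A.states, sup s ≤ b
  sig_ok : ∀ e ∈ A.events, tevOk b t (sig e)
  resp : ∀ ⦃s e s'⦄, A.tr s e s' → tevStep b (sup s) (sig e) = some (sup s')

/-- A region solves the ESSP atom `(e,s)` if `sig e` does not occur at `sup s` in `τ`. -/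
def Region.solvesESSP {b t : ℕ} {S E : Type} {A : TS S E} (R : Region b t A)
    (e : E) (s : S) : Prop :=
  tevStep b (R.sup s) (R.sig e) = none

/-- A region solves the SSP atom `(s,s')` if `sup s ≠ sup s'`. -/
def Region.solvesSSP {b t : ℕ} {S E : Type} {A : TS S E} (R : Region b t A)
    (s s' : S) : Prop :=
  R.sup s ≠ R.sup s'

/-- `A` has the `τ^b_t`-ESSP: every ESSP atom is solvable. -/
def TS.hasESSP (b t : ℕ) {S E : Type} (A : TS S E) : Prop :=
  ∀ e ∈ A.events, ∀ s ∈ A.states, ¬ A.occurs e s → ∃ R : Region b t A, R.solvesESSP e s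

/-- `A` has the `τ^b_t`-SSP: every SSP atom is solvable. -/
def TS.hasSSP (b t : ℕ) {S E : Type} (A : TS S E) : Prop :=
  ∀ s ∈ A.states, ∀ s' ∈ A.states, s ≠ s' → ∃ R : Region b t A, R.solvesSSP s s'

/-- `A` is `τ^b_t`-feasible. -/
def TS.feasible (b t : ℕ) {S E : Type} (A : TS S E) : Prop :=
  A.hasESSP b t ∧ A.hasSSP b t

/-! ## Combinators: linear TSs, relabeled states, unions -/

/-- The linear TS given by the word `w`: states `0,…,w.length`, and an
`e`-labeled transition from `s` to `s+1` whenever `w[s] = e`. -/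
def TS.chain {E : Type} (w : List E) : TS ℕ E where
  states := {s | s ≤ w.length}
  events := {e | e ∈ w}
  tr s e s' := w[s]? = some e ∧ s' = s + 1
  tr_mem := by
    rintro s e s' ⟨h, rfl⟩
    have hs : s < w.length := by
      by_contra hc
      rw [List.getElem?_eq_none (Nat.le_of_not_lt hc)] at h
      cases h
    obtain ⟨hlt, rfl⟩ := List.getElem?_eq_some_iff.mp h
    exact ⟨Nat.le_of_lt hs, List.getElem_mem hlt, hs⟩

/-- Renaming the states of a TS along `f`. -/
def TS.mapStates {S S' E : Type} (f : S → S') (A : TS S E) : TS S' E where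
  states := f '' A.states
  events := A.events
  tr s e s' := ∃ a a', A.tr a e a' ∧ s = f a ∧ s' = f a'
  tr_mem := by
    rintro s e s' ⟨a, a', h, rfl, rfl⟩
    obtain ⟨h1, h2, h3⟩ := A.tr_mem h
    exact ⟨⟨a, h1, rfl⟩, h2, ⟨a', h3, rfl⟩⟩

/-- The union `U(A_i)_{i : ι}` of a family of TSs over the same ambient types. -/
def TS.unionFam {ι S E : Type} (F : ι → TS S E) : TS S E where
  states := ⋃ i, (F i).states
  events := ⋃ i, (F i).events
  tr s e s' := ∃ i, (F i).tr s e s'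
  tr_mem := by
    rintro s e s' ⟨i, h⟩
    obtain ⟨h1, h2, h3⟩ := (F i).tr_mem h
    exact ⟨Set.mem_iUnion.2 ⟨i, h1⟩, Set.mem_iUnion.2 ⟨i, h2⟩, Set.mem_iUnion.2 ⟨i, h3⟩⟩

/-- The SSP for a union: all SSP atoms given by distinct states of the *same*
constituent are solvable by regions of the union. -/
def unionSSP (b t : ℕ) {ι S E : Type} (F : ι → TS S E) : Prop :=
  ∀ i : ι, ∀ s ∈ (F i).states, ∀ s' ∈ (F i).states, s ≠ s' →
    ∃ R : Region b t (TS.unionFam F), R.solvesSSP s s'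
/-! ## Cubic monotone one-in-three 3-SAT -/

/-- An instance `φ = {C_0,…,C_{m-1}}` of cubic monotone one-in-three 3-SAT with
variables `V(φ) = {X_0,…,X_{m-1}}` (identified with `Fin m`): every clause
`C_i = {X_{i,0}, X_{i,1}, X_{i,2}}` consists of three distinct variables and every
variable occurs in exactly three clauses. -/
structure SatInstance (m : ℕ) where
  C : Fin m → Fin 3 → Fin m
  clause_distinct : ∀ i : Fin m, Function.Injective (C i)
  cubic : ∀ v : Fin m,
    (Finset.univ.filter (fun p : Fin m × Fin 3 => C p.1 p.2 = v)).card = 3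

/-- `M` is a one-in-three model of `φ`: every clause contains exactly one variable of `M`. -/
def SatInstance.model {m : ℕ} (φ : SatInstance m) (M : Set (Fin m)) : Prop :=
  ∀ i : Fin m, ∃! r : Fin 3, φ.C i r ∈ M

/-! ## Events of the gadgets -/

inductive Ev where
  | k | z | z0 | z1 | o0 | o1 | o2 | u
  | kj (j : ℕ)  -- the interface events k_j
  | x (i : ℕ)   -- the events x_i
  | p (i : ℕ)   -- the events p_i
  | vj (j : ℕ)  -- the events v_j
  | X (v : ℕ)   -- the variable events X_v
deriving DecidableEq

/-! ## The gadget TSs (states are pairs (tag, position)) -/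

/-- `H_0`, with `h_{0,i} = (0,i)`. -/
def H0 (b : ℕ) : TS (ℕ × ℕ) Ev :=
  (TS.chain (List.replicate b Ev.k ++ List.replicate b Ev.z ++ [Ev.o0] ++
    List.replicate b Ev.k ++ List.replicate b Ev.z ++ List.replicate b Ev.o1 ++
    List.replicate b Ev.k)).mapStates (fun i => (0, i))

/-- `H_1`, with `h_{1,i} = (0,i)`. -/
def H1 (b : ℕ) : TS (ℕ × ℕ) Ev :=
  (TS.chain (List.replicate b Ev.k ++ [Ev.z0, Ev.o0] ++ List.replicate b Ev.k ++
    [Ev.z1, Ev.z0, Ev.o2] ++ List.replicate b Ev.k)).mapStates (fun i => (0, i))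

/-- `H_2`, with `h_{2,i} = (0,i)`. -/
def H2 (b : ℕ) : TS (ℕ × ℕ) Ev :=
  (TS.chain (List.replicate b Ev.k ++ [Ev.o0] ++ List.replicate b Ev.k ++
    [Ev.o2] ++ List.replicate b Ev.k)).mapStates (fun i => (0, i))

/-- `D_{j,0}`, with `d_{j,0,i} = (j+1,i)`. -/
def D0 (b j : ℕ) : TS (ℕ × ℕ) Ev :=
  (TS.chain ([Ev.o0, Ev.kj j] ++ List.replicate (b+1) Ev.o1)).mapStates
    (fun i => (j + 1, i))

/-- `D_{j,1}`, with `d_{j,1,i} = (j+1,i)`. -/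
def D1 (b j : ℕ) : TS (ℕ × ℕ) Ev :=
  (TS.chain [Ev.o0, Ev.kj j, Ev.o2]).mapStates (fun i => (j + 1, i))

/-- The word of the gadget `T_{i,a}` (`a ∈ {0,1,2}`) of the translator `T`. -/
def Tword (b : ℕ) {m : ℕ} (φ : SatInstance m) (i : Fin m) (a : Fin 3) : List Ev :=
  if a = 0 then
    [Ev.kj (6 * (i : ℕ))] ++ List.replicate b (Ev.X ((φ.C i 0 : Fin m) : ℕ)) ++
    [Ev.x (i : ℕ)] ++ List.replicate b (Ev.X ((φ.C i 2 : Fin m) : ℕ)) ++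
    [Ev.kj (6 * (i : ℕ) + 1)]
  else if a = 1 then
    [Ev.kj (6 * (i : ℕ) + 2)] ++ List.replicate b (Ev.X ((φ.C i 1 : Fin m) : ℕ)) ++
    [Ev.p (i : ℕ), Ev.kj (6 * (i : ℕ) + 3)]
  else
    [Ev.kj (6 * (i : ℕ) + 4), Ev.x (i : ℕ), Ev.p (i : ℕ), Ev.kj (6 * (i : ℕ) + 5)]

/-- The gadget `T_{i,a}` of the translator `T`, with states `t_{i,a,pos} = (tag, pos)`. -/
def Tgad (b tag : ℕ) {m : ℕ} (φ : SatInstance m) (i : Fin m) (a : Fin 3) :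
    TS (ℕ × ℕ) Ev :=
  (TS.chain (Tword b φ i a)).mapStates (fun pos => (tag, pos))

/-- The translator `T = U(T_{0,0}, T_{0,1}, T_{0,2}, …, T_{m-1,2})` (standalone,
with `t_{i,a,pos} = (3i+a+1, pos)`). -/
def Ttrans (b : ℕ) {m : ℕ} (φ : SatInstance m) : TS (ℕ × ℕ) Ev :=
  TS.unionFam (fun q : Fin m × Fin 3 => Tgad b (3 * (q.1 : ℕ) + (q.2 : ℕ) + 1) φ q.1 q.2)

/-- `H_3`, with `h_{3,0,i} = (0,i)` and `h_{3,1,i} = (1,i)`: the union of the path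
`h_{3,0,0} --k^b--> h_{3,0,b}` and the path
`h_{3,0,0} --u--> h_{3,1,0} --k^{b-1}--> h_{3,1,b-1} --z--> h_{3,0,b}`. -/
def H3 (b : ℕ) : TS (ℕ × ℕ) Ev :=
  TS.unionFam (fun c : Bool =>
    if c then (TS.chain (List.replicate b Ev.k)).mapStates (fun i => (0, i))
    else (TS.chain ([Ev.u] ++ List.replicate (b-1) Ev.k ++ [Ev.z])).mapStates
      (fun i => if i = 0 then (0, 0) else if i = b + 1 then (0, b) else (1, i - 1)))

/-- The set `E_0 = {(m,m) : 1 ≤ m ≤ b} ∪ {0}`. -/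
def Ezero (b : ℕ) : Set Tev :=
  {e | (∃ q, 1 ≤ q ∧ q ≤ b ∧ e = Tev.pr q q) ∨ e = Tev.gr 0}

/-- The first row `f_{j,0,0} --k^b--> f_{j,0,b}` of `F_j`, with `f_{j,0,i} = (4j+2, i)`. -/
def Fch0 (b j : ℕ) : TS (ℕ × ℕ) Ev :=
  (TS.chain (List.replicate b Ev.k)).mapStates (fun i => (4 * j + 2, i))

/-- The second row `f_{j,0,0} --v_j--> f_{j,1,0} --k^{b-1}--> f_{j,1,b-1} --X_j--> f_{j,0,b}`
of `F_j`, with `f_{j,1,i} = (4j+3, i)`. -/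
def Fch1 (b j : ℕ) : TS (ℕ × ℕ) Ev :=
  (TS.chain ([Ev.vj j] ++ List.replicate (b-1) Ev.k ++ [Ev.X j])).mapStates
    (fun i => if i = 0 then (4 * j + 2, 0) else if i = b + 1 then (4 * j + 2, b)
      else (4 * j + 3, i - 1))

/-- `F_j` as the union of its two rows. -/
def Fgad (b j : ℕ) : TS (ℕ × ℕ) Ev :=
  TS.unionFam (fun c : Bool => if c then Fch0 b j else Fch1 b j)

/-- `G_j`, with `g_{j,i} = (4j+4, i)`. -/
def Ggad (b j : ℕ) : TS (ℕ × ℕ) Ev :=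
  (TS.chain (List.replicate b Ev.k ++ [Ev.X j])).mapStates (fun i => (4 * j + 4, i))

/-- The clause gadget `T_i` (of the translator for the group-extended types),
with `t_{i,pos} = (4i+5, pos)`. -/
def Tgad2 (b : ℕ) {m : ℕ} (φ : SatInstance m) (i : Fin m) : TS (ℕ × ℕ) Ev :=
  (TS.chain (List.replicate b Ev.k ++
    [Ev.X ((φ.C i 0 : Fin m) : ℕ), Ev.X ((φ.C i 1 : Fin m) : ℕ),
     Ev.X ((φ.C i 2 : Fin m) : ℕ), Ev.z] ++ List.replicate b Ev.k)).mapStates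
    (fun pos => (4 * (i : ℕ) + 5, pos))

/-- The translator `T_τ = U(F_0, G_0, …, F_{m-1}, G_{m-1}, T_0, …, T_{m-1})`
for the group-extended types. -/
def Ttrans2fam (b : ℕ) {m : ℕ} (φ : SatInstance m) : Fin m × Fin 3 → TS (ℕ × ℕ) Ev :=
  fun q => if q.2 = 0 then Fgad b (q.1 : ℕ)
    else if q.2 = 1 then Ggad b (q.1 : ℕ) else Tgad2 b φ q.1

def Ttrans2 (b : ℕ) {m : ℕ} (φ : SatInstance m) : TS (ℕ × ℕ) Ev :=
  TS.unionFam (Ttrans2fam b φ)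
/-! ## The key unions and the unions of key and translator -/

/-- The family of constituents of the key `K_{τ^b_0} = U(H_0, D_{0,0},…,D_{6m-1,0})`. -/
def K0fam (b m : ℕ) : Option (Fin (6 * m)) → TS (ℕ × ℕ) Ev
  | none => H0 b
  | some j => D0 b (j : ℕ)

def K0 (b m : ℕ) : TS (ℕ × ℕ) Ev := TS.unionFam (K0fam b m)

/-- The family of constituents of the key `K_{τ^b_1} = U(H_1, D_{0,1},…,D_{6m-1,1})`. -/
def K1fam (b m : ℕ) : Option (Fin (6 * m)) → TS (ℕ × ℕ) Ev
  | none => H1 b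
  | some j => D1 b (j : ℕ)

def K1 (b m : ℕ) : TS (ℕ × ℕ) Ev := TS.unionFam (K1fam b m)

/-- The family of constituents of the key `K = U(H_2, D_{0,1},…,D_{6m-1,1})`. -/
def K2fam (b m : ℕ) : Option (Fin (6 * m)) → TS (ℕ × ℕ) Ev
  | none => H2 b
  | some j => D1 b (j : ℕ)

def K2 (b m : ℕ) : TS (ℕ × ℕ) Ev := TS.unionFam (K2fam b m)

/-- The family of constituents of `U_{τ^b_0} = U(H_0, D_{0,0},…,D_{6m-1,0}, T)`. -/
def U0fam (b : ℕ) {m : ℕ} (φ : SatInstance m) :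
    Option (Fin (6 * m) ⊕ Fin m × Fin 3) → TS (ℕ × ℕ) Ev
  | none => H0 b
  | some (.inl j) => D0 b (j : ℕ)
  | some (.inr q) => Tgad b (6 * m + 1 + 3 * (q.1 : ℕ) + (q.2 : ℕ)) φ q.1 q.2

def U0 (b : ℕ) {m : ℕ} (φ : SatInstance m) : TS (ℕ × ℕ) Ev := TS.unionFam (U0fam b φ)

/-- The family of constituents of `U_{τ^b_1} = U(H_1, D_{0,1},…,D_{6m-1,1}, T)`. -/
def U1fam (b : ℕ) {m : ℕ} (φ : SatInstance m) :
    Option (Fin (6 * m) ⊕ Fin m × Fin 3) → TS (ℕ × ℕ) Ev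
  | none => H1 b
  | some (.inl j) => D1 b (j : ℕ)
  | some (.inr q) => Tgad b (6 * m + 1 + 3 * (q.1 : ℕ) + (q.2 : ℕ)) φ q.1 q.2

def U1 (b : ℕ) {m : ℕ} (φ : SatInstance m) : TS (ℕ × ℕ) Ev := TS.unionFam (U1fam b φ)

/-- The family of constituents of `W = U(H_2, D_{0,1},…,D_{6m-1,1}, T)`. -/
def Wfam (b : ℕ) {m : ℕ} (φ : SatInstance m) :
    Option (Fin (6 * m) ⊕ Fin m × Fin 3) → TS (ℕ × ℕ) Ev
  | none => H2 b
  | some (.inl j) => D1 b (j : ℕ)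
  | some (.inr q) => Tgad b (6 * m + 1 + 3 * (q.1 : ℕ) + (q.2 : ℕ)) φ q.1 q.2

def Wun (b : ℕ) {m : ℕ} (φ : SatInstance m) : TS (ℕ × ℕ) Ev := TS.unionFam (Wfam b φ)

/-- The family of constituents of
`U_τ = U(H_3, F_0, G_0, …, F_{m-1}, G_{m-1}, T_0, …, T_{m-1})` for `τ ∈ {τ^b_2, τ^b_3}`. -/
def U2fam (b : ℕ) {m : ℕ} (φ : SatInstance m) :
    Option (Fin m × Fin 3) → TS (ℕ × ℕ) Ev
  | none => H3 b
  | some q => Ttrans2fam b φ q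

def U2 (b : ℕ) {m : ℕ} (φ : SatInstance m) : TS (ℕ × ℕ) Ev := TS.unionFam (U2fam b φ)

/-! ## The joining `A(U)` -/

/-- The joining `A(U)` of a union `U = U(A_0,…,A_n)` of initialized TSs (`A_i`
initialized at `s0 i`): fresh connector states `q_i = Sum.inr i`, fresh events
`w_{i+1} = Sum.inr (Sum.inl i)` (`i : Fin n`) and `y_i = Sum.inr (Sum.inr i)`,
and transitions `q_i --w_{i+1}--> q_{i+1}` and `q_i --y_i--> s0 i`. -/
def joining {S E : Type} {n : ℕ} (F : Fin (n + 1) → TS S E) (s0 : Fin (n + 1) → S)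
    (h0 : ∀ i, s0 i ∈ (F i).states) :
    TS (S ⊕ Fin (n + 1)) (E ⊕ (Fin n ⊕ Fin (n + 1))) where
  states := {st | (∃ a ∈ (TS.unionFam F).states, st = Sum.inl a) ∨ ∃ q, st = Sum.inr q}
  events := {ev | (∃ e ∈ (TS.unionFam F).events, ev = Sum.inl e) ∨ ∃ c, ev = Sum.inr c}
  tr st ev st' :=
    (∃ a e a', (TS.unionFam F).tr a e a' ∧
        st = Sum.inl a ∧ ev = Sum.inl e ∧ st' = Sum.inl a') ∨
    (∃ i : Fin n, st = Sum.inr i.castSucc ∧ ev = Sum.inr (Sum.inl i) ∧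
        st' = Sum.inr i.succ) ∨
    (∃ i : Fin (n + 1), st = Sum.inr i ∧ ev = Sum.inr (Sum.inr i) ∧
        st' = Sum.inl (s0 i))
  tr_mem := by
    rintro st ev st' (⟨a, e, a', h, rfl, rfl, rfl⟩ | ⟨i, rfl, rfl, rfl⟩ | ⟨i, rfl, rfl, rfl⟩)
    · obtain ⟨h1, h2, h3⟩ := (TS.unionFam F).tr_mem h
      exact ⟨Or.inl ⟨a, h1, rfl⟩, Or.inl ⟨e, h2, rfl⟩, Or.inl ⟨a', h3, rfl⟩⟩
    · exact ⟨Or.inr ⟨_, rfl⟩, Or.inr ⟨_, rfl⟩, Or.inr ⟨_, rfl⟩⟩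
    · exact ⟨Or.inr ⟨_, rfl⟩, Or.inr ⟨_, rfl⟩,
        Or.inl ⟨_, Set.mem_iUnion.2 ⟨i, h0 i⟩, rfl⟩⟩

/-! A signature that can be fired along the word of a linear TS defines a region of it: the
support of a state is the value reached along the prefix leading to it. As `T` is a union of
disjoint linear TSs, it suffices to fire one signature along all of its words from `0`.
With `sig(k_j) = (0,b)`, every gadget has to come down from `b` to `0` exactly once between its
two `k`-events, and the model says where. For the unique `X_{i,r} ∈ M ∩ C_i`, the event `X_{i,r}`
gets `(1,0)`, so that `X_{i,r}^b` descends; in the gadgets of `C_i` without `X_{i,r}` the descent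
is `x_i ↦ (b,0)` if `r = 1` and `p_i ↦ (b,0)` if `r ≠ 1`. All other events get `(0,0)`, and no
signature value has both components positive, so this is a region for `τ^b_1` as well. -/

open Function

section Run

variable {E : Type} (b : ℕ) (sig : E → Tev)

/-- Fires `sig` along `w` from `v` in `τ^b`; `none` as soon as a step is undefined. -/
def tevRun (v : ℕ) (w : List E) : Option ℕ := w.foldlM (fun s e => tevStep b s (sig e)) v

variable {b sig}

@[simp]
lemma tevRun_nil (v : ℕ) : tevRun b sig v [] = some v := rfl

@[simp]
lemma tevRun_singleton (v : ℕ) (e : E) : tevRun b sig v [e] = tevStep b v (sig e) := by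
  simp [tevRun]

lemma tevRun_cons (v : ℕ) (e : E) (w : List E) :
    tevRun b sig v (e :: w) = (tevStep b v (sig e)).bind (tevRun b sig · w) := by
  simp [tevRun]

lemma tevRun_append (v : ℕ) (w₁ w₂ : List E) :
    tevRun b sig v (w₁ ++ w₂) = (tevRun b sig v w₁).bind (tevRun b sig · w₂) :=
  List.foldlM_append

lemma le_of_tevStep_eq_some {s s' : ℕ} {e : Tev} (h : tevStep b s e = some s') : s' ≤ b := by
  cases e with
  | pr m n =>
    simp only [tevStep] at h
    split_ifs at h with hs
    exact Option.some_inj.mp h ▸ hs.2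
  | gr c =>
    simp only [tevStep, Option.some_inj] at h
    exact h ▸ Nat.lt_succ_iff.mp (Nat.mod_lt _ b.succ_pos)

lemma le_of_tevRun_eq_some {v v' : ℕ} (hv : v ≤ b) {w : List E} :
    tevRun b sig v w = some v' → v' ≤ b := by
  induction w using List.reverseRecOn generalizing v' with
  | nil => rintro ⟨⟩; exact hv
  | append_singleton w e _ =>
    intro h
    rw [tevRun_append, Option.bind_eq_some_iff] at h
    obtain ⟨u, -, hu⟩ := h
    exact le_of_tevStep_eq_some (by rwa [tevRun_singleton] at hu)

lemma isSome_tevRun_take {v : ℕ} {w : List E} (h : (tevRun b sig v w).isSome) (n : ℕ) :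
    (tevRun b sig v (w.take n)).isSome := by
  rw [← List.take_append_drop n w, tevRun_append] at h
  cases hn : tevRun b sig v (w.take n) <;> simp_all

lemma tevRun_take_add_one {v n : ℕ} {w : List E} {e : E} (he : w[n]? = some e) :
    tevRun b sig v (w.take (n + 1)) =
      (tevRun b sig v (w.take n)).bind (tevStep b · (sig e)) := by
  simp [List.take_add_one, he, tevRun_append]

end Run

theorem exists_region_unionFam_chain {ι T E : Type} {b t : ℕ} (w : ι → List E) {tag : ι → T}
    (htag : Injective tag) {sig : E → Tev} (hok : ∀ i, ∀ e ∈ w i, tevOk b t (sig e))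
    {v₀ : ℕ} (hv₀ : v₀ ≤ b) (hrun : ∀ i, (tevRun b sig v₀ (w i)).isSome) :
    ∃ R : Region b t (TS.unionFam fun i => (TS.chain (w i)).mapStates (tag i, ·)),
      R.sig = sig := by
  classical
  let sup : T × ℕ → ℕ := fun s =>
    if h : ∃ i, tag i = s.1 then (tevRun b sig v₀ ((w h.choose).take s.2)).getD 0 else 0
  have hsup : ∀ i n, sup (tag i, n) = (tevRun b sig v₀ ((w i).take n)).getD 0 := by
    intro i n
    have h : ∃ j, tag j = tag i := ⟨i, rfl⟩
    simp only [sup, dif_pos h, htag h.choose_spec]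
  refine ⟨⟨sup, sig, ?_, ?_, ?_⟩, rfl⟩
  · rintro _ ⟨_, ⟨i, rfl⟩, n, -, rfl⟩
    rw [hsup]
    cases h : tevRun b sig v₀ ((w i).take n)
    · exact Nat.zero_le b
    · exact le_of_tevRun_eq_some hv₀ h
  · rintro e ⟨_, ⟨i, rfl⟩, he⟩
    exact hok i e he
  · rintro _ e _ ⟨i, n, _, ⟨he, rfl⟩, rfl, rfl⟩
    obtain ⟨u, hu⟩ := Option.isSome_iff_exists.mp (isSome_tevRun_take (hrun i) (n + 1))
    rw [tevRun_take_add_one he, Option.bind_eq_some_iff] at hu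
    obtain ⟨u', hu', hstep⟩ := hu
    rw [hsup, hsup, tevRun_take_add_one he, hu', Option.bind_some, Option.getD_some, hstep,
      Option.getD_some]

section Replicate

variable {E : Type} {b : ℕ} {sig : E → Tev} {e : E}

lemma tevRun_replicate_of_eq_pr_zero_zero (he : sig e = .pr 0 0) {v : ℕ} (hv : v ≤ b)
    (n : ℕ) : tevRun b sig v (List.replicate n e) = some v := by
  induction n with
  | zero => rfl
  | succ n ih => simp [List.replicate_succ', tevRun_append, ih, he, tevStep, hv]

lemma tevRun_replicate_of_eq_pr_one_zero (he : sig e = .pr 1 0) {v n : ℕ} (hn : n ≤ v)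
    (hv : v ≤ b) : tevRun b sig v (List.replicate n e) = some (v - n) := by
  induction n with
  | zero => rfl
  | succ n ih =>
    rw [List.replicate_succ', tevRun_append, ih (by omega)]
    simp only [Option.bind_some, tevRun_singleton, he, tevStep]
    rw [if_pos (by omega)]
    congr 1

end Replicate

section Translator

open Classical

variable (b : ℕ) {m : ℕ} (φ : SatInstance m) (M : Set (Fin m))

noncomputable def modelSig : Ev → Tev
  | .kj _ => .pr 0 b
  | .X v => if ∃ u ∈ M, (u : ℕ) = v then .pr 1 0 else .pr 0 0
  | .x i => if ∃ c : Fin m, (c : ℕ) = i ∧ φ.C c 1 ∈ M then .pr b 0 else .pr 0 0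
  | .p i => if ∃ c : Fin m, (c : ℕ) = i ∧ φ.C c 1 ∈ M then .pr 0 0 else .pr b 0
  | _ => .pr 0 0

lemma modelSig_X (u : Fin m) :
    modelSig b φ M (.X u) = if u ∈ M then .pr 1 0 else .pr 0 0 := by
  simp [modelSig, Fin.val_inj]

lemma modelSig_x (i : Fin m) :
    modelSig b φ M (.x i) = if φ.C i 1 ∈ M then .pr b 0 else .pr 0 0 := by
  simp [modelSig, Fin.val_inj]

lemma modelSig_p (i : Fin m) :
    modelSig b φ M (.p i) = if φ.C i 1 ∈ M then .pr 0 0 else .pr b 0 := by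
  simp [modelSig, Fin.val_inj]

lemma tevOk_modelSig {t : ℕ} (hb : 1 ≤ b) (ht : t = 0 ∨ t = 1) (e : Ev) :
    tevOk b t (modelSig b φ M e) := by
  have hok : ∀ {k l : ℕ}, k ≤ b → l ≤ b → k = 0 ∨ l = 0 → tevOk b t (.pr k l) :=
    fun hk hl h => ⟨hk, hl, fun _ => h, by omega⟩
  cases e <;> simp only [modelSig] <;> (try split_ifs) <;>
    exact hok (by omega) (by omega) (by omega)

lemma tevRun_Tword (hM : φ.model M) (i : Fin m) (a : Fin 3) :
    tevRun b (modelSig b φ M) 0 (Tword b φ i a) = some b := by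
  obtain ⟨r, hr, hr_unique⟩ := hM i
  have h1 : φ.C i 1 ∈ M ↔ r = 1 := ⟨fun h => (hr_unique 1 h).symm, (· ▸ hr)⟩
  have hX : ∀ c, modelSig b φ M (.X (φ.C i c)) = if c = r then .pr 1 0 else .pr 0 0 :=
    fun c => by rw [modelSig_X]; exact if_congr ⟨hr_unique c, (· ▸ hr)⟩ rfl rfl
  have hx : modelSig b φ M (.x i) = if r = 1 then .pr b 0 else .pr 0 0 := by
    rw [modelSig_x]; exact if_congr h1 rfl rfl
  have hp : modelSig b φ M (.p i) = if r = 1 then .pr 0 0 else .pr b 0 := by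
    rw [modelSig_p]; exact if_congr h1 rfl rfl
  have hk : ∀ j, modelSig b φ M (.kj j) = .pr 0 b := fun _ => rfl
  obtain rfl | rfl | rfl : r = 0 ∨ r = 1 ∨ r = 2 := by omega
  all_goals fin_cases a <;>
    simp [Tword, tevRun_cons, tevRun_append, hX, hx, hp, hk, tevStep,
      tevRun_replicate_of_eq_pr_zero_zero, tevRun_replicate_of_eq_pr_one_zero]

end Translator

theorem stmt8_general (b t : ℕ) (hb : 1 ≤ b) (ht : t = 0 ∨ t = 1)
    {m : ℕ} (φ : SatInstance m)
    (hmod : ∃ M : Set (Fin m), φ.model M) :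
    ∃ R : Region b t (Ttrans b φ), ∀ j < 6 * m, R.sig (Ev.kj j) = Tev.pr 0 b := by
  obtain ⟨M, hM⟩ := hmod
  have htag : Injective fun q : Fin m × Fin 3 => 3 * (q.1 : ℕ) + q.2 + 1 := by
    rintro ⟨i, a⟩ ⟨j, c⟩ h
    simp only [Prod.mk.injEq, Fin.ext_iff] at h ⊢
    omega
  obtain ⟨R, hR⟩ := exists_region_unionFam_chain (fun q => Tword b φ q.1 q.2) htag
    (fun _ e _ => tevOk_modelSig b φ M hb ht e) (Nat.zero_le b)
    (fun q => by rw [tevRun_Tword b φ M hM]; rfl)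
  exact ⟨R, fun j _ => by rw [hR]; rfl⟩

/-- Existence for the translator `T`: for `τ ∈ {τ^b_0, τ^b_1}`,
if `φ` has a one-in-three model, then some `τ`-region of `T` satisfies
`sig(k_0) = … = sig(k_{6m-1}) = (0,b)`. -/
theorem stmt8 (b t : ℕ) (hb : 1 ≤ b) (ht : t = 0 ∨ t = 1)
    {m : ℕ} (hm : 1 ≤ m) (φ : SatInstance m)
    (hmod : ∃ M : Set (Fin m), φ.model M) :
    ∃ R : Region b t (Ttrans b φ), ∀ j < 6 * m, R.sig (Ev.kj j) = Tev.pr 0 b :=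
  stmt8_general b t hb ht φ hmod
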